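/- arXiv:2410.16940 — 3 statements merged into one kernel-verified Lean document; each statement's English description precedes it below -/
import Mathlib

section
/- Let P be a nonempty finite set of primes with product P̄, and let n be a positive integer with gcd(n, P̄²) > 1. Then G_α(n) := ∑_{k | gcd(n, P̄²)} σ_α(n/k) · (μ ∗ μN^α)(k) = 0. -/
/-!
Write `h = μ ∗ μN^α`. Since `σ_α = ζ ∗ N^α` and `N^α` is completely multiplicative,
`σ_α ∗ h = (ζ ∗ μ) ∗ N^α·(ζ ∗ μ) = ε`. Restricting `h` to the divisors of `d = gcd(n, P̄²)` keeps
it multiplicative, so the sum is a multiplicative function evaluated at `n`, and it vanishes as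
soon as one local factor does. Take a prime `p ∣ d` and let `p^a ∥ n`. The function `h` is a
convolution of two functions supported on squarefree numbers, so `h(p^i) = 0` for `i ≥ 3`, while
`p^i ∣ d` for `i ≤ min(a, 2)`. Hence the restriction does not change the local factor at `p`,
which is therefore `(σ_α ∗ h)(p^a) = ε(p^a) = 0`.
-/

open scoped BigOperators

noncomputable def sigmaC (α : ℂ) (n : ℕ) : ℂ := ∑ d ∈ n.divisors, (d : ℂ) ^ α

noncomputable def muC (n : ℕ) : ℂ := (ArithmeticFunction.moebius n : ℤ)

noncomputable def dconv (f g : ℕ → ℂ) (n : ℕ) : ℂ :=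
  ∑ d ∈ n.divisors, f d * g (n / d)

noncomputable def muMuN (α : ℂ) : ℕ → ℂ :=
  dconv muC (fun n => muC n * (n : ℂ) ^ α)

open Finset
open scoped ArithmeticFunction.zeta ArithmeticFunction.Moebius

namespace ArithmeticFunction

section General

variable {R : Type*}

theorem pmul_mul_pmul_of_map_mul [CommSemiring R] {f : ArithmeticFunction R}
    (hf : ∀ m n, f (m * n) = f m * f n) (g h : ArithmeticFunction R) :
    f.pmul g * f.pmul h = f.pmul (g * h) := by
  ext n
  simp only [mul_apply, pmul_apply, Finset.mul_sum]
  refine sum_congr rfl fun x hx => ?_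
  rw [← (Nat.mem_divisorsAntidiagonal.mp hx).1, hf]
  ring

theorem mul_apply_congr_right [Semiring R] {f g₁ g₂ : ArithmeticFunction R} {n : ℕ}
    (h : ∀ k, k ∣ n → g₁ k = g₂ k) : (f * g₁) n = (f * g₂) n := by
  simp only [mul_apply]
  refine sum_congr rfl fun x hx => ?_
  rw [h x.2 (Dvd.intro_left _ (Nat.mem_divisorsAntidiagonal.mp hx).1)]

theorem mul_apply_prime_pow_eq_zero [Semiring R] {f g : ArithmeticFunction R} {p i : ℕ}
    (hp : p.Prime) (hf : ∀ j, 2 ≤ j → f (p ^ j) = 0) (hg : ∀ j, 2 ≤ j → g (p ^ j) = 0)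
    (hi : 3 ≤ i) : (f * g) (p ^ i) = 0 := by
  rw [mul_apply, Nat.sum_divisorsAntidiagonal (fun x y => f x * g y),
    Nat.sum_divisors_prime_pow hp]
  refine sum_eq_zero fun j hj => ?_
  have hji : j ≤ i := Nat.lt_succ_iff.mp (mem_range.mp hj)
  rw [Nat.pow_div hji hp.pos]
  by_cases hj2 : 2 ≤ j
  · rw [hf j hj2, zero_mul]
  · rw [hg (i - j) (by omega), mul_zero]

theorem IsMultiplicative.eq_zero_of_apply_ordProj_eq_zero [MonoidWithZero R]
    {f : ArithmeticFunction R} (hf : f.IsMultiplicative) {n p : ℕ} (hp : p.Prime) (hn : n ≠ 0)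
    (h : f (p ^ n.factorization p) = 0) : f n = 0 := by
  rw [← Nat.ordProj_mul_ordCompl_eq_self n p,
    hf.map_mul_of_coprime ((Nat.coprime_ordCompl hp hn).pow_left _), h, zero_mul]

theorem coe_moebius_apply_prime_pow_eq_zero [Ring R] {p j : ℕ} (hp : p.Prime) (hj : 2 ≤ j) :
    (μ : ArithmeticFunction R) (p ^ j) = 0 := by
  rw [intCoe_apply, moebius_apply_prime_pow hp (by omega), if_neg (by omega), Int.cast_zero]

end General

section DivisorsIndicator

variable {R : Type*}

def divisorsIndicator [Zero R] [One R] (d : ℕ) : ArithmeticFunction R :=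
  ⟨fun k => if k ∈ d.divisors then 1 else 0, by simp⟩

theorem divisorsIndicator_apply [Zero R] [One R] {d k : ℕ} :
    divisorsIndicator d k = if k ∈ d.divisors then (1 : R) else 0 :=
  rfl

theorem isMultiplicative_divisorsIndicator [MonoidWithZero R] {d : ℕ} (hd : d ≠ 0) :
    (divisorsIndicator d : ArithmeticFunction R).IsMultiplicative := by
  refine ⟨by simp [divisorsIndicator_apply, hd], fun {m n} hmn => ?_⟩
  have hdvd : m * n ∣ d ↔ m ∣ d ∧ n ∣ d :=
    ⟨fun h => ⟨(Dvd.intro _ rfl).trans h, (Dvd.intro_left _ rfl).trans h⟩,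
      fun h => hmn.mul_dvd_of_dvd_of_dvd h.1 h.2⟩
  simp only [divisorsIndicator_apply, Nat.mem_divisors, hd, hdvd, ne_eq, not_false_eq_true,
    and_true, ite_and]
  split_ifs <;> simp

theorem sum_divisors_eq_mul_pmul_divisorsIndicator [Semiring R] (f g : ArithmeticFunction R)
    {d n : ℕ} (hn : n ≠ 0) (hdn : d ∣ n) :
    ∑ k ∈ d.divisors, f (n / k) * g k = (f * g.pmul (divisorsIndicator d)) n := by
  rw [mul_apply, Nat.sum_divisorsAntidiagonal' (fun x y => f x * g.pmul (divisorsIndicator d) y)]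
  simp only [pmul_apply, divisorsIndicator_apply, mul_ite, mul_one, mul_zero, sum_ite_mem,
    inter_eq_right.mpr (Nat.divisors_subset_of_dvd hn hdn)]

end DivisorsIndicator

section Cpow

noncomputable def cpow (α : ℂ) : ArithmeticFunction ℂ :=
  ⟨fun n => if n = 0 then 0 else (n : ℂ) ^ α, if_pos rfl⟩

variable {α : ℂ}

theorem cpow_apply {n : ℕ} (hn : n ≠ 0) : cpow α n = (n : ℂ) ^ α :=
  if_neg hn

theorem cpow_apply_mul (m n : ℕ) : cpow α (m * n) = cpow α m * cpow α n := by
  rcases eq_or_ne m 0 with rfl | hm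
  · simp [cpow]
  rcases eq_or_ne n 0 with rfl | hn
  · simp [cpow]
  rw [cpow_apply (mul_ne_zero hm hn), cpow_apply hm, cpow_apply hn, Nat.cast_mul,
    Complex.natCast_mul_natCast_cpow]

theorem cpow_apply_one : cpow α 1 = 1 := by
  simp [cpow_apply]

theorem isMultiplicative_cpow : (cpow α).IsMultiplicative :=
  ⟨cpow_apply_one, fun _ => cpow_apply_mul _ _⟩

theorem cpow_mul_pmul_cpow_coe_moebius :
    cpow α * (μ : ArithmeticFunction ℂ).pmul (cpow α) = 1 := by
  have hpmul_one : (cpow α).pmul 1 = 1 := by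
    ext n
    by_cases hn : n = 1
    · simp [hn, cpow_apply_one]
    · simp [one_apply_ne hn]
  calc cpow α * (μ : ArithmeticFunction ℂ).pmul (cpow α)
      = (cpow α).pmul ζ * (cpow α).pmul μ := by rw [pmul_zeta, pmul_comm]
    _ = (cpow α).pmul (ζ * μ) := pmul_mul_pmul_of_map_mul cpow_apply_mul _ _
    _ = 1 := by rw [coe_zeta_mul_coe_moebius, hpmul_one]

end Cpow

end ArithmeticFunction

open ArithmeticFunction

section DivisorSum

variable {α : ℂ}

theorem sigmaC_eq_coe_zeta_mul_cpow : sigmaC α = ⇑((ζ : ArithmeticFunction ℂ) * cpow α) := by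
  funext n
  rw [sigmaC, coe_zeta_mul_apply]
  exact sum_congr rfl fun d hd => (cpow_apply (Nat.ne_of_gt (Nat.pos_of_mem_divisors hd))).symm

theorem muMuN_eq_coe_moebius_mul_pmul_cpow :
    muMuN α = ⇑((μ : ArithmeticFunction ℂ) * (μ : ArithmeticFunction ℂ).pmul (cpow α)) := by
  funext n
  have hcpow : ∀ x ∈ n.divisorsAntidiagonal,
      (μ : ArithmeticFunction ℂ) x.1 * (μ : ArithmeticFunction ℂ).pmul (cpow α) x.2
        = muC x.1 * (muC x.2 * (x.2 : ℂ) ^ α) := fun x hx => by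
    rw [pmul_apply, cpow_apply (Nat.right_ne_zero_of_mem_divisorsAntidiagonal hx)]
    simp [muC]
  rw [muMuN, dconv, mul_apply, sum_congr rfl hcpow,
    Nat.sum_divisorsAntidiagonal (fun x y => muC x * (muC y * (y : ℂ) ^ α))]

theorem sigma_mul_moebius_mul_pmul_cpow :
    (ζ : ArithmeticFunction ℂ) * cpow α *
      ((μ : ArithmeticFunction ℂ) * (μ : ArithmeticFunction ℂ).pmul (cpow α)) = 1 := by
  rw [mul_mul_mul_comm, coe_zeta_mul_coe_moebius, cpow_mul_pmul_cpow_coe_moebius, one_mul]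

theorem sum_divisors_sigmaC_mul_muMuN_eq_zero {n d p : ℕ} (hn : n ≠ 0) (hdn : d ∣ n)
    (hp : p.Prime) (hpn : p ∣ n) (hpd : ∀ i ≤ 2, p ^ i ∣ n → p ^ i ∣ d) :
    ∑ k ∈ d.divisors, sigmaC α (n / k) * muMuN α k = 0 := by
  set σα : ArithmeticFunction ℂ := ζ * cpow α
  set h : ArithmeticFunction ℂ := μ * (μ : ArithmeticFunction ℂ).pmul (cpow α)
  have hd : d ≠ 0 := ne_zero_of_dvd_ne_zero hn hdn
  have hσα : σα.IsMultiplicative := isMultiplicative_zeta.natCast.mul isMultiplicative_cpow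
  have hh : h.IsMultiplicative :=
    isMultiplicative_moebius.intCast.mul
      (isMultiplicative_moebius.intCast.pmul isMultiplicative_cpow)
  rw [sigmaC_eq_coe_zeta_mul_cpow, muMuN_eq_coe_moebius_mul_pmul_cpow,
    sum_divisors_eq_mul_pmul_divisorsIndicator _ _ hn hdn]
  refine IsMultiplicative.eq_zero_of_apply_ordProj_eq_zero
    (hσα.mul (hh.pmul (isMultiplicative_divisorsIndicator hd))) hp hn ?_
  set a := n.factorization p
  have ha : a ≠ 0 := (hp.factorization_pos_of_dvd hn hpn).ne'
  have h_cubefree : ∀ i, 3 ≤ i → h (p ^ i) = 0 := fun i hi =>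
    mul_apply_prime_pow_eq_zero hp (fun _ => coe_moebius_apply_prime_pow_eq_zero hp)
      (fun j hj => by rw [pmul_apply, coe_moebius_apply_prime_pow_eq_zero hp hj, zero_mul]) hi
  have h_restrict : ∀ k, k ∣ p ^ a → h.pmul (divisorsIndicator d) k = h k := by
    intro k hk
    obtain ⟨i, hia, rfl⟩ := (Nat.dvd_prime_pow hp).mp hk
    rw [pmul_apply]
    by_cases hi : i ≤ 2
    · have hpid : p ^ i ∣ d := hpd i hi ((pow_dvd_pow p hia).trans (Nat.ordProj_dvd n p))
      rw [divisorsIndicator_apply, if_pos (Nat.mem_divisors.mpr ⟨hpid, hd⟩), mul_one]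
    · rw [h_cubefree i (by omega), zero_mul]
  calc (σα * h.pmul (divisorsIndicator d)) (p ^ a)
      = (σα * h) (p ^ a) := mul_apply_congr_right h_restrict
    _ = (1 : ArithmeticFunction ℂ) (p ^ a) := by rw [sigma_mul_moebius_mul_pmul_cpow]
    _ = 0 := one_apply_ne (Nat.one_lt_pow ha hp.one_lt).ne'

end DivisorSum

theorem stmt3_general (α : ℂ) (P : Finset ℕ)
    (n : ℕ) (hn : 0 < n) (hgcd : Nat.gcd n ((∏ p ∈ P, p) ^ 2) ≠ 1) :
    ∑ k ∈ (Nat.gcd n ((∏ p ∈ P, p) ^ 2)).divisors, sigmaC α (n / k) * muMuN α k = 0 := by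
  set g := Nat.gcd n ((∏ p ∈ P, p) ^ 2)
  have hp : g.minFac.Prime := Nat.minFac_prime hgcd
  have hpg : g.minFac ∣ g := Nat.minFac_dvd g
  have hp_sq : g.minFac ^ 2 ∣ (∏ p ∈ P, p) ^ 2 :=
    pow_dvd_pow_of_dvd (hp.dvd_of_dvd_pow (hpg.trans (Nat.gcd_dvd_right _ _))) 2
  exact sum_divisors_sigmaC_mul_muMuN_eq_zero hn.ne' (Nat.gcd_dvd_left _ _) hp
    (hpg.trans (Nat.gcd_dvd_left _ _))
    fun i hi hpi => Nat.dvd_gcd hpi ((pow_dvd_pow _ hi).trans hp_sq)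

theorem stmt3 (α : ℂ) (P : Finset ℕ) (hP : ∀ p ∈ P, Nat.Prime p) (hne : P.Nonempty)
    (n : ℕ) (hn : 0 < n) (hgcd : Nat.gcd n ((∏ p ∈ P, p) ^ 2) ≠ 1) :
    ∑ k ∈ (Nat.gcd n ((∏ p ∈ P, p) ^ 2)).divisors, sigmaC α (n / k) * muMuN α k = 0 :=
  stmt3_general α P n hn hgcd
end

section
/- For complex z with Re(z) > max{0, -Re(s) + Re(α)}, the Mellin-type identity ∫_0^∞ x^{z-1} Γ((s-α)/2, x²) dx = (1/z) Γ((z+s-α)/2) holds, where Γ(a, x) = ∫_x^∞ t^{a-1} e^{-t} dt is the upper incomplete gamma function. -/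
/-!
Write `Γ(a, u) = ∫_{t > u} t^{a-1} e^{-t} dt`. Swapping the order of integration over the region
`0 < u < t` (Fubini, justified by `∫_0^t |u^{w-1}| du = t^{Re w} / Re w` and the convergence of
the real Gamma integral) gives the Mellin transform
`∫_0^∞ u^{w-1} Γ(a, u) du = ∫_0^∞ (t^w / w) t^{a-1} e^{-t} dt = Γ(a + w) / w`.
The substitution `u = x²` turns the Mellin transform at `z / 2` into the integral of the theorem,
up to the factor `1 / 2`.
-/

open MeasureTheory

/-- Upper incomplete gamma function `Γ(a, x) = ∫_x^∞ t^{a-1} e^{-t} dt` for real `x`. -/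
noncomputable def upperGamma (a : ℂ) (x : ℝ) : ℂ :=
  ∫ t in Set.Ioi x, (t : ℂ) ^ (a - 1) * Complex.exp (-(t : ℂ))

open Set Complex

section TriangleFubini

variable {f g : ℝ → ℂ}

lemma indicator_lt_mul_apply_left (u t : ℝ) :
    {p : ℝ × ℝ | p.1 < p.2}.indicator (fun p => g p.1 * f p.2) (u, t) =
      (Iio t).indicator (fun u => g u * f t) u := rfl

lemma indicator_lt_mul_apply_right (u t : ℝ) :
    {p : ℝ × ℝ | p.1 < p.2}.indicator (fun p => g p.1 * f p.2) (u, t) =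
      (Ioi u).indicator (fun t => g u * f t) t := rfl

lemma integrable_indicator_lt_mul (hg : Measurable g) (hf : Measurable f)
    (hg_int : ∀ t > 0, IntegrableOn g (Ioo 0 t))
    (hfg : IntegrableOn (fun t => (∫ u in Ioo 0 t, ‖g u‖) * ‖f t‖) (Ioi 0)) :
    Integrable ({p : ℝ × ℝ | p.1 < p.2}.indicator fun p => g p.1 * f p.2)
      ((volume.restrict (Ioi 0)).prod (volume.restrict (Ioi 0))) := by
  have hmeas : Measurable ({p : ℝ × ℝ | p.1 < p.2}.indicator fun p => g p.1 * f p.2) :=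
    ((hg.comp measurable_fst).mul (hf.comp measurable_snd)).indicator
      (measurableSet_lt measurable_fst measurable_snd)
  refine (integrable_prod_iff' hmeas.aestronglyMeasurable).2 ⟨?_, ?_⟩
  · filter_upwards [ae_restrict_mem measurableSet_Ioi] with t ht
    simp only [indicator_lt_mul_apply_left]
    rw [integrable_indicator_iff measurableSet_Iio, IntegrableOn,
      Measure.restrict_restrict measurableSet_Iio, Iio_inter_Ioi]
    exact (hg_int t ht).mul_const _
  · refine hfg.congr_fun_ae ?_
    filter_upwards [ae_restrict_mem measurableSet_Ioi] with t ht
    simp only [indicator_lt_mul_apply_left, norm_indicator_eq_indicator_norm, norm_mul]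
    rw [setIntegral_indicator measurableSet_Iio, Ioi_inter_Iio, integral_mul_const]

lemma integral_Ioi_mul_integral_Ioi_eq (hg : Measurable g) (hf : Measurable f)
    (hg_int : ∀ t > 0, IntegrableOn g (Ioo 0 t))
    (hfg : IntegrableOn (fun t => (∫ u in Ioo 0 t, ‖g u‖) * ‖f t‖) (Ioi 0)) :
    ∫ u in Ioi 0, g u * ∫ t in Ioi u, f t = ∫ t in Ioi 0, (∫ u in Ioo 0 t, g u) * f t := by
  have hswap := integral_integral_swap
    (f := fun u t => {p : ℝ × ℝ | p.1 < p.2}.indicator (fun p => g p.1 * f p.2) (u, t))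
    (integrable_indicator_lt_mul hg hf hg_int hfg)
  convert hswap using 1
  · refine setIntegral_congr_fun measurableSet_Ioi fun u hu => ?_
    simp only [indicator_lt_mul_apply_right]
    rw [setIntegral_indicator measurableSet_Ioi,
      inter_eq_self_of_subset_right (Ioi_subset_Ioi (le_of_lt hu)), integral_const_mul]
  · refine setIntegral_congr_fun measurableSet_Ioi fun t ht => ?_
    simp only [indicator_lt_mul_apply_left]
    rw [setIntegral_indicator measurableSet_Iio, Ioi_inter_Iio, integral_mul_const]

end TriangleFubini

section PowerIntegrals

variable {w : ℂ} (hw : 0 < w.re)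
include hw

lemma integrableOn_Ioo_cpow_sub_one (t : ℝ) :
    IntegrableOn (fun u : ℝ => (u : ℂ) ^ (w - 1)) (Ioo 0 t) := by
  rcases le_total 0 t with ht | ht
  · refine (intervalIntegrable_iff_integrableOn_Ioo_of_le ht).1 ?_
    exact intervalIntegral.intervalIntegrable_cpow' (by simp [hw])
  · simp [Ioo_eq_empty (not_lt.2 ht)]

lemma integral_Ioo_cpow_sub_one {t : ℝ} (ht : 0 ≤ t) :
    ∫ u in Ioo 0 t, (u : ℂ) ^ (w - 1) = (t : ℂ) ^ w / w := by
  have hw0 : w ≠ 0 := fun h => by simp [h] at hw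
  rw [← integral_Ioc_eq_integral_Ioo, ← intervalIntegral.integral_of_le ht,
    integral_cpow (Or.inl (by simp [hw])), sub_add_cancel, ofReal_zero, zero_cpow hw0, sub_zero]

lemma integral_Ioo_norm_cpow_sub_one {t : ℝ} (ht : 0 ≤ t) :
    ∫ u in Ioo 0 t, ‖(u : ℂ) ^ (w - 1)‖ = t ^ w.re / w.re := by
  rw [setIntegral_congr_fun measurableSet_Ioo fun u hu => by
      rw [norm_cpow_eq_rpow_re_of_pos hu.1, sub_re, one_re],
    ← integral_Ioc_eq_integral_Ioo, ← intervalIntegral.integral_of_le ht,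
    integral_rpow (Or.inl (by linarith)), sub_add_cancel, Real.zero_rpow hw.ne', sub_zero]

end PowerIntegrals

theorem mellin_upperGamma {a w : ℂ} (hw : 0 < w.re) (haw : 0 < (a + w).re) :
    mellin (upperGamma a) w = Gamma (a + w) / w := by
  have hg : Measurable fun u : ℝ => (u : ℂ) ^ (w - 1) := by fun_prop
  have hf : Measurable fun t : ℝ => (t : ℂ) ^ (a - 1) * exp (-(t : ℂ)) := by fun_prop
  have hfg : IntegrableOn
      (fun t : ℝ => (∫ u in Ioo 0 t, ‖(u : ℂ) ^ (w - 1)‖) * ‖(t : ℂ) ^ (a - 1) * exp (-(t : ℂ))‖)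
      (Ioi (0 : ℝ)) := by
    refine IntegrableOn.congr_fun ((Real.GammaIntegral_convergent haw).const_mul w.re⁻¹)
      (fun t ht => ?_) measurableSet_Ioi
    rw [integral_Ioo_norm_cpow_sub_one hw (le_of_lt ht), norm_mul,
      norm_cpow_eq_rpow_re_of_pos ht, norm_exp, neg_re, ofReal_re, add_re, sub_re, one_re,
      show a.re + w.re - 1 = w.re + (a.re - 1) by ring, Real.rpow_add ht]
    ring
  calc mellin (upperGamma a) w
      = ∫ t in Ioi (0 : ℝ),
          (∫ u in Ioo 0 t, (u : ℂ) ^ (w - 1)) * ((t : ℂ) ^ (a - 1) * exp (-(t : ℂ))) :=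
        integral_Ioi_mul_integral_Ioi_eq hg hf (fun t _ => integrableOn_Ioo_cpow_sub_one hw t) hfg
    _ = ∫ t in Ioi (0 : ℝ), w⁻¹ * (↑(Real.exp (-t)) * (t : ℂ) ^ (a + w - 1)) := by
        refine setIntegral_congr_fun measurableSet_Ioi fun t ht => ?_
        have ht0 : (t : ℂ) ≠ 0 := ofReal_ne_zero.2 (ne_of_gt ht)
        rw [integral_Ioo_cpow_sub_one hw (le_of_lt ht),
          show a + w - 1 = w + (a - 1) by ring, cpow_add _ _ ht0, ofReal_exp, ofReal_neg]
        ring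
    _ = Gamma (a + w) / w := by
        rw [integral_const_mul, Gamma_eq_integral haw, GammaIntegral, div_eq_inv_mul]

theorem stmt11 (s α z : ℂ) (hz : 0 < z.re) (hzsα : 0 < (z + s - α).re) :
    ∫ x in Set.Ioi (0 : ℝ), (x : ℂ) ^ (z - 1) * upperGamma ((s - α) / 2) (x ^ 2) =
      (1 / z) * Complex.Gamma ((z + s - α) / 2) := by
  have hsum : (s - α) / 2 + z / 2 = (z + s - α) / 2 := by ring
  have hz2 : 0 < (z / 2).re := by simpa using hz
  have hsum_re : 0 < ((s - α) / 2 + z / 2).re := by rw [hsum]; simpa using hzsα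
  calc ∫ x in Ioi (0 : ℝ), (x : ℂ) ^ (z - 1) * upperGamma ((s - α) / 2) (x ^ 2)
      = mellin (fun x => upperGamma ((s - α) / 2) (x ^ (2 : ℝ))) z := by
        simp only [mellin, smul_eq_mul, Real.rpow_two]
    _ = (1 / 2 : ℂ) * mellin (upperGamma ((s - α) / 2)) (z / 2) := by
        rw [mellin_comp_rpow]; norm_num
    _ = (1 / z) * Gamma ((z + s - α) / 2) := by
        rw [mellin_upperGamma hz2 hsum_re, hsum]; field_simp
end

section
/- For Re(β) > 0 and Re(γ) > 0 and any complex ν, ∫_0^∞ x^{ν-1} e^{-γx - β/x} dx = 2 (β/γ)^{ν/2} K_ν(2√(γβ)), where K_ν is the modified Bessel function of the second kind. -/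
/-!
Write `I(γ, β)` for the integral on the left. For `β = c² γ` with real `c > 0`, the substitution
`x = c t` turns `I(γ, β)` into `c^ν I(cγ, cγ)`, and `I(w, w) = 2 K_ν(2w)` is the defining integral
of `K_ν`; on this ray the identity only needs the principal-branch facts `(c²)^{ν/2} = c^ν` and
`((cγ)²)^{1/2} = cγ`, valid because `Re(cγ) > 0`. Both sides are holomorphic in `β` on the right
half-plane (differentiation under the integral sign, locally dominated by `x^s e^{-εx - ε/x}`), so
the identity theorem extends the equality from the ray to the whole half-plane.
-/

open MeasureTheory

/-- Modified Bessel function of the second kind, via the integral representation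
`K_ν(z) = (1/2) ∫_0^∞ t^{ν-1} exp(-(z/2)(t + 1/t)) dt` (valid for `Re z > 0`). -/
noncomputable def besselK (ν z : ℂ) : ℂ :=
  (1 / 2) * ∫ t in Set.Ioi (0 : ℝ),
    (t : ℂ) ^ (ν - 1) * Complex.exp (-(z / 2) * ((t : ℂ) + 1 / (t : ℂ)))

open Set Real Filter Topology

lemma continuousOn_rpow_mul_exp_neg_mul_sub_div (p a b : ℝ) :
    ContinuousOn (fun x : ℝ => x ^ p * exp (-(a * x) - b / x)) (Ioi 0) := by
  refine continuousOn_of_forall_continuousAt fun x (hx : 0 < x) => ?_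
  have hx0 : x ≠ 0 := hx.ne'
  fun_prop (disch := simp [hx0])

lemma integrableOn_Ioc_rpow_mul_exp_neg_div (p : ℝ) {b : ℝ} (hb : 0 < b) :
    IntegrableOn (fun x : ℝ => x ^ p * exp (-(b / x))) (Ioc 0 1) := by
  obtain ⟨n, hn⟩ : ∃ n : ℕ, 0 ≤ p + n := ⟨⌈-p⌉₊, by linarith [Nat.le_ceil (-p)]⟩
  refine Integrable.mono' (g := fun _ => (n.factorial / b ^ n : ℝ)) (integrableOn_const (by simp))
    ?_ ?_
  · refine ContinuousOn.aestronglyMeasurable (fun x hx => ?_) measurableSet_Ioc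
    have hx0 : x ≠ 0 := hx.1.ne'
    exact ContinuousAt.continuousWithinAt (by fun_prop (disch := simp [hx0]))
  filter_upwards [ae_restrict_mem measurableSet_Ioc] with x ⟨hx0, hx1⟩
  rw [norm_of_nonneg (by positivity)]
  -- `exp (b / x) ≥ (b / x) ^ n / n!` trades the singularity at `0` for the factor `x ^ n`
  have hexp : exp (-(b / x)) * (b / x) ^ n ≤ n.factorial := by
    have := pow_div_factorial_le_exp (b / x) (div_pos hb hx0).le n
    rw [exp_neg, inv_mul_le_iff₀ (exp_pos _)]
    rwa [div_le_iff₀ (by positivity)] at this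
  calc x ^ p * exp (-(b / x))
      = x ^ (p + n) / b ^ n * (exp (-(b / x)) * (b / x) ^ n) := by
        rw [rpow_add hx0, rpow_natCast, div_pow]; field_simp
    _ ≤ 1 / b ^ n * n.factorial := by
        gcongr
        exact rpow_le_one hx0.le hx1 hn
    _ = n.factorial / b ^ n := by ring

lemma integrableOn_rpow_mul_exp_neg_mul_sub_div (p : ℝ) {a b : ℝ} (ha : 0 < a) (hb : 0 < b) :
    IntegrableOn (fun x : ℝ => x ^ p * exp (-(a * x) - b / x)) (Ioi 0) := by
  have hmeas : ∀ s ⊆ Ioi (0 : ℝ), MeasurableSet s →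
      AEStronglyMeasurable (fun x : ℝ => x ^ p * exp (-(a * x) - b / x)) (volume.restrict s) :=
    fun s hs hms =>
      ((continuousOn_rpow_mul_exp_neg_mul_sub_div p a b).mono hs).aestronglyMeasurable hms
  rw [← Ioc_union_Ioi_eq_Ioi zero_le_one]
  refine IntegrableOn.union ?_ ?_
  · refine (integrableOn_Ioc_rpow_mul_exp_neg_div p hb).mono'
      (hmeas _ Ioc_subset_Ioi_self measurableSet_Ioc) ?_
    filter_upwards [ae_restrict_mem measurableSet_Ioc] with x hx
    have hx0 := hx.1
    rw [norm_of_nonneg (by positivity)]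
    gcongr
    nlinarith
  · have hdom : IntegrableOn (fun x : ℝ => x ^ max p 0 * exp (-a * x ^ (1 : ℝ))) (Ioi 1) :=
      (integrableOn_rpow_mul_exp_neg_mul_rpow (neg_one_lt_zero.trans_le (le_max_right p 0))
        one_pos ha).mono_set (Ioi_subset_Ioi zero_le_one)
    refine hdom.mono' (hmeas _ (Ioi_subset_Ioi zero_le_one) measurableSet_Ioi) ?_
    filter_upwards [ae_restrict_mem measurableSet_Ioi] with x (hx : 1 < x)
    have hx0 : 0 < x := zero_lt_one.trans hx
    rw [norm_of_nonneg (by positivity), rpow_one, neg_mul]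
    gcongr
    · exact hx.le
    · exact le_max_left _ _
    · nlinarith [div_pos hb (zero_lt_one.trans hx)]

noncomputable def besselKernel (ν a b : ℂ) (x : ℝ) : ℂ :=
  (x : ℂ) ^ (ν - 1) * Complex.exp (-a * x - b / x)

noncomputable def besselIntegral (ν a b : ℂ) : ℂ :=
  ∫ x in Ioi (0 : ℝ), besselKernel ν a b x

lemma norm_besselKernel (ν a b : ℂ) {x : ℝ} (hx : 0 < x) :
    ‖besselKernel ν a b x‖ = x ^ (ν.re - 1) * exp (-(a.re * x) - b.re / x) := by
  simp [besselKernel, Complex.norm_exp, Complex.norm_cpow_eq_rpow_re_of_pos hx,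
    Complex.div_ofReal_re]

lemma norm_besselKernel_le (ν : ℂ) {a b : ℂ} {a' b' x : ℝ} (ha : a' ≤ a.re) (hb : b' ≤ b.re)
    (hx : 0 < x) :
    ‖besselKernel ν a b x‖ ≤ x ^ (ν.re - 1) * exp (-(a' * x) - b' / x) := by
  rw [norm_besselKernel ν a b hx]
  gcongr

lemma continuousOn_besselKernel (ν a b : ℂ) : ContinuousOn (besselKernel ν a b) (Ioi 0) := by
  refine continuousOn_of_forall_continuousAt fun x (hx : 0 < x) => ?_
  have hx0 : (x : ℂ) ≠ 0 := Complex.ofReal_ne_zero.2 hx.ne'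
  have hslit : (x : ℂ) ∈ Complex.slitPlane := Complex.ofReal_mem_slitPlane.2 hx
  unfold besselKernel
  fun_prop (disch := assumption)

lemma integrableOn_besselKernel (ν : ℂ) {a b : ℂ} (ha : 0 < a.re) (hb : 0 < b.re) :
    IntegrableOn (besselKernel ν a b) (Ioi 0) := by
  refine (integrableOn_rpow_mul_exp_neg_mul_sub_div (ν.re - 1) ha hb).mono'
    ((continuousOn_besselKernel ν a b).aestronglyMeasurable measurableSet_Ioi) ?_
  filter_upwards [ae_restrict_mem measurableSet_Ioi] with x hx
  exact (norm_besselKernel ν a b hx).le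

/-- The derivative of `(a, b) ↦ -a x - b / x`. -/
noncomputable def besselExponentDeriv (x : ℝ) : ℂ × ℂ →L[ℂ] ℂ :=
  -((x : ℂ) • ContinuousLinearMap.fst ℂ ℂ ℂ + (x : ℂ)⁻¹ • ContinuousLinearMap.snd ℂ ℂ ℂ)

lemma norm_besselExponentDeriv_le {x : ℝ} (hx : 0 < x) : ‖besselExponentDeriv x‖ ≤ x + x⁻¹ := by
  rw [besselExponentDeriv, norm_neg]
  refine (norm_add_le _ _).trans (add_le_add ?_ ?_)
  · grw [norm_smul, ContinuousLinearMap.norm_fst_le, Complex.norm_real, norm_of_nonneg hx.le,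
      mul_one]
  · grw [norm_smul, ContinuousLinearMap.norm_snd_le, norm_inv, Complex.norm_real,
      norm_of_nonneg hx.le, mul_one]

lemma hasFDerivAt_besselKernel (ν : ℂ) (x : ℝ) (p : ℂ × ℂ) :
    HasFDerivAt (fun q : ℂ × ℂ => besselKernel ν q.1 q.2 x)
      (besselKernel ν p.1 p.2 x • besselExponentDeriv x) p := by
  have hlin : (fun q : ℂ × ℂ => -q.1 * x - q.2 / x) = besselExponentDeriv x := by
    ext q
    simp [besselExponentDeriv, div_eq_inv_mul]
    ring
  have := ((besselExponentDeriv x).hasFDerivAt (x := p)).cexp.const_mul ((x : ℂ) ^ (ν - 1))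
  rw [← hlin, smul_smul] at this
  exact this

lemma half_min_re_le_of_mem_ball {p₀ p : ℂ × ℂ}
    (hp : p ∈ Metric.ball p₀ (min p₀.1.re p₀.2.re / 2)) :
    min p₀.1.re p₀.2.re / 2 ≤ p.1.re ∧ min p₀.1.re p₀.2.re / 2 ≤ p.2.re := by
  rw [Metric.mem_ball, dist_eq_norm] at hp
  have h1 := (Complex.abs_re_le_norm (p - p₀).1).trans (norm_fst_le (p - p₀))
  have h2 := (Complex.abs_re_le_norm (p - p₀).2).trans (norm_snd_le (p - p₀))
  simp only [Prod.fst_sub, Prod.snd_sub, Complex.sub_re, abs_le] at h1 h2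
  constructor <;> linarith [min_le_left p₀.1.re p₀.2.re, min_le_right p₀.1.re p₀.2.re]

lemma differentiableOn_besselIntegral (ν : ℂ) :
    DifferentiableOn ℂ (fun p : ℂ × ℂ => besselIntegral ν p.1 p.2)
      {p | 0 < p.1.re ∧ 0 < p.2.re} := by
  rintro p₀ ⟨ha₀, hb₀⟩
  refine DifferentiableAt.differentiableWithinAt ?_
  set ε := min p₀.1.re p₀.2.re / 2
  have hε0 : 0 < ε := by positivity
  have hre : ∀ p ∈ Metric.ball p₀ ε, ε ≤ p.1.re ∧ ε ≤ p.2.re :=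
    fun _ => half_min_re_le_of_mem_ball
  set g : ℝ → ℝ := fun x => x ^ (ν.re - 1) * exp (-(ε * x) - ε / x)
  have hbound_int : IntegrableOn (fun x => g x * (x + x⁻¹)) (Ioi 0) := by
    refine ((integrableOn_rpow_mul_exp_neg_mul_sub_div ν.re hε0 hε0).add
      (integrableOn_rpow_mul_exp_neg_mul_sub_div (ν.re - 2) hε0 hε0)).congr_fun
      (fun x (hx : 0 < x) => ?_) measurableSet_Ioi
    have h1 : x ^ ν.re = x ^ (ν.re - 1) * x := by
      rw [← rpow_add_one hx.ne']; ring_nf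
    have h2 : x ^ (ν.re - 2) = x ^ (ν.re - 1) * x⁻¹ := by
      rw [← rpow_neg_one, ← rpow_add hx]; ring_nf
    simp only [Pi.add_apply, g]
    rw [h1, h2]
    ring
  have hF'_meas : AEStronglyMeasurable
      (fun x => besselKernel ν p₀.1 p₀.2 x • besselExponentDeriv x) (volume.restrict (Ioi 0)) := by
    refine ((continuousOn_besselKernel ν p₀.1 p₀.2).smul ?_).aestronglyMeasurable measurableSet_Ioi
    refine continuousOn_of_forall_continuousAt fun x (hx : 0 < x) => ?_
    have hx0 : (x : ℂ) ≠ 0 := Complex.ofReal_ne_zero.2 hx.ne'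
    unfold besselExponentDeriv
    fun_prop (disch := assumption)
  refine (hasFDerivAt_integral_of_dominated_of_fderiv_le (Metric.ball_mem_nhds p₀ hε0)
    (Eventually.of_forall fun p =>
      (continuousOn_besselKernel ν p.1 p.2).aestronglyMeasurable measurableSet_Ioi)
    (integrableOn_besselKernel ν ha₀ hb₀) hF'_meas ?_ hbound_int
    (Eventually.of_forall fun x p _ => hasFDerivAt_besselKernel ν x p)).differentiableAt
  filter_upwards [ae_restrict_mem measurableSet_Ioi] with x (hx : 0 < x) p hp
  rw [norm_smul]
  exact mul_le_mul (norm_besselKernel_le ν (hre p hp).1 (hre p hp).2 hx)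
    (norm_besselExponentDeriv_le hx) (norm_nonneg _) (by positivity)

lemma besselKernel_mul (ν a b : ℂ) {c x : ℝ} (hc : 0 < c) (hx : 0 < x) :
    besselKernel ν a b (c * x) = (c : ℂ) ^ (ν - 1) * besselKernel ν (c * a) (b / c) x := by
  have hc0 : (c : ℂ) ≠ 0 := Complex.ofReal_ne_zero.2 hc.ne'
  have hx0 : (x : ℂ) ≠ 0 := Complex.ofReal_ne_zero.2 hx.ne'
  rw [besselKernel, besselKernel, Complex.ofReal_mul, Complex.mul_cpow_ofReal_nonneg hc.le hx.le]
  field_simp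

lemma besselIntegral_eq_cpow_mul (ν a b : ℂ) {c : ℝ} (hc : 0 < c) :
    besselIntegral ν a b = (c : ℂ) ^ ν * besselIntegral ν (c * a) (b / c) := by
  have hc0 : (c : ℂ) ≠ 0 := Complex.ofReal_ne_zero.2 hc.ne'
  have h := integral_comp_mul_left_Ioi (besselKernel ν a b) 0 hc
  rw [mul_zero, setIntegral_congr_fun measurableSet_Ioi fun x hx => besselKernel_mul ν a b hc hx,
    integral_const_mul, ← besselIntegral, ← besselIntegral, Complex.real_smul,
    Complex.ofReal_inv, eq_inv_mul_iff_mul_eq₀ hc0] at h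
  rw [← h, Complex.cpow_sub _ _ hc0, Complex.cpow_one]
  field_simp

lemma besselK_two_mul (ν w : ℂ) : besselK ν (2 * w) = besselIntegral ν w w / 2 := by
  rw [besselK, besselIntegral, one_div_mul_eq_div]
  congr 2 with t
  rw [besselKernel]
  ring_nf

lemma mul_mem_slitPlane_of_re_pos {a b : ℂ} (ha : 0 < a.re) (hb : 0 < b.re) :
    a * b ∈ Complex.slitPlane := by
  rw [Complex.mem_slitPlane_iff, Complex.mul_re, Complex.mul_im]
  by_contra! h
  -- once `(a * b).im = 0`, `b.re * (a * b).re = a.re * (b.re² + b.im²) > 0`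
  have him : (a.re * b.im + a.im * b.re) * b.im = 0 := by rw [h.2]; ring
  nlinarith [mul_pos ha (mul_pos hb hb), mul_nonneg ha.le (mul_self_nonneg b.im)]

lemma div_mem_slitPlane_of_re_pos {a b : ℂ} (ha : 0 < a.re) (hb : 0 < b.re) :
    a / b ∈ Complex.slitPlane := by
  have hb0 : b ≠ 0 := fun h => by simp [h] at hb
  refine mul_mem_slitPlane_of_re_pos ha ?_
  rw [Complex.inv_re]
  exact div_pos hb (Complex.normSq_pos.2 hb0)

lemma re_cpow_one_half_pos {z : ℂ} (hz : z ∈ Complex.slitPlane) : 0 < (z ^ (1 / 2 : ℂ)).re := by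
  rw [Complex.cpow_def_of_ne_zero (Complex.slitPlane_ne_zero hz), Complex.exp_re]
  have him : (Complex.log z * (1 / 2)).im = z.arg / 2 := by
    simp [Complex.log_im, div_eq_mul_inv]
  have h1 := Complex.neg_pi_lt_arg z
  have h2 := lt_of_le_of_ne (Complex.arg_le_pi z) (Complex.slitPlane_arg_ne_pi hz)
  rw [him]
  have := Real.cos_pos_of_mem_Ioo (x := z.arg / 2) ⟨by linarith, by linarith⟩
  positivity

lemma differentiableOn_besselK_two_mul_sqrt (ν : ℂ) {γ : ℂ} (hγ : 0 < γ.re) :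
    DifferentiableOn ℂ (fun b => besselK ν (2 * (γ * b) ^ (1 / 2 : ℂ))) {z | 0 < z.re} := by
  have hsqrt : DifferentiableOn ℂ (fun b => (γ * b) ^ (1 / 2 : ℂ)) {z | 0 < z.re} :=
    fun b (hb : 0 < b.re) => ((differentiableAt_id.const_mul γ).cpow_const
      (mul_mem_slitPlane_of_re_pos hγ hb)).differentiableWithinAt
  simp_rw [besselK_two_mul]
  refine ((differentiableOn_besselIntegral ν).comp (hsqrt.prodMk hsqrt) fun b hb => ?_).div_const 2
  exact ⟨re_cpow_one_half_pos (mul_mem_slitPlane_of_re_pos hγ hb),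
    re_cpow_one_half_pos (mul_mem_slitPlane_of_re_pos hγ hb)⟩

lemma tendsto_ofReal_sq_mul_nhdsGT_one {γ : ℂ} (hγ : γ ≠ 0) :
    Tendsto (fun c : ℝ => (c : ℂ) ^ 2 * γ) (𝓝[>] 1) (𝓝[≠] γ) := by
  refine tendsto_nhdsWithin_iff.2 ⟨?_, ?_⟩
  · have : Continuous (fun c : ℝ => (c : ℂ) ^ 2 * γ) := by fun_prop
    simpa using (this.tendsto 1).mono_left nhdsWithin_le_nhds
  · filter_upwards [self_mem_nhdsWithin] with c (hc : 1 < c)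
    rw [mem_compl_singleton_iff, Ne, mul_eq_right₀ hγ]
    exact_mod_cast (one_lt_pow₀ hc two_ne_zero).ne'

lemma besselIntegral_sq_mul (ν γ : ℂ) {c : ℝ} (hc : 0 < c) (hγ : 0 < γ.re) :
    besselIntegral ν γ ((c : ℂ) ^ 2 * γ) =
      2 * ((c : ℂ) ^ 2 * γ / γ) ^ (ν / 2) *
        besselK ν (2 * (γ * ((c : ℂ) ^ 2 * γ)) ^ (1 / 2 : ℂ)) := by
  have hγ0 : γ ≠ 0 := fun h => by simp [h] at hγ
  have hc0 : (c : ℂ) ≠ 0 := Complex.ofReal_ne_zero.2 hc.ne'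
  have hpow : ((c : ℂ) ^ 2) ^ (ν / 2) = (c : ℂ) ^ ν := by
    rw [← Complex.cpow_ofNat_mul' (by simp [Complex.arg_ofReal_of_nonneg hc.le, Real.pi_pos])
      (by simp [Complex.arg_ofReal_of_nonneg hc.le, Real.pi_pos.le]), mul_div_cancel₀ _ two_ne_zero]
  have hsqrt : (γ * ((c : ℂ) ^ 2 * γ)) ^ (1 / 2 : ℂ) = c * γ := by
    rw [show γ * ((c : ℂ) ^ 2 * γ) = (c * γ) ^ 2 by ring, one_div]
    exact Complex.sq_cpow_two_inv (by simpa using mul_pos hc hγ)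
  rw [besselIntegral_eq_cpow_mul ν γ _ hc, mul_div_cancel_right₀ _ hγ0, hpow, hsqrt,
    besselK_two_mul, pow_two, mul_assoc, mul_div_cancel_left₀ _ hc0]
  ring

theorem stmt13 (ν β γ : ℂ) (hβ : 0 < β.re) (hγ : 0 < γ.re) :
    ∫ x in Set.Ioi (0 : ℝ), (x : ℂ) ^ (ν - 1) * Complex.exp (-γ * (x : ℂ) - β / (x : ℂ)) =
      2 * (β / γ) ^ (ν / 2) * besselK ν (2 * (γ * β) ^ ((1 : ℂ) / 2)) := by
  show besselIntegral ν γ β = _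
  have hγ0 : γ ≠ 0 := fun h => by simp [h] at hγ
  have hU : IsOpen {z : ℂ | 0 < z.re} := isOpen_lt continuous_const Complex.continuous_re
  have hlhs : AnalyticOnNhd ℂ (besselIntegral ν γ) {z | 0 < z.re} :=
    ((differentiableOn_besselIntegral ν).comp
      ((differentiableOn_const γ).prodMk differentiableOn_id) fun b hb => ⟨hγ, hb⟩).analyticOnNhd hU
  have hrhs : AnalyticOnNhd ℂ
      (fun b => 2 * (b / γ) ^ (ν / 2) * besselK ν (2 * (γ * b) ^ (1 / 2 : ℂ))) {z | 0 < z.re} := by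
    refine (DifferentiableOn.mul ?_ (differentiableOn_besselK_two_mul_sqrt ν hγ)).analyticOnNhd hU
    exact fun b (hb : 0 < b.re) => (((differentiableAt_id.div_const γ).cpow_const
      (div_mem_slitPlane_of_re_pos hb hγ)).const_mul 2).differentiableWithinAt
  have hray : ∃ᶠ b in 𝓝[≠] γ, besselIntegral ν γ b =
      2 * (b / γ) ^ (ν / 2) * besselK ν (2 * (γ * b) ^ (1 / 2 : ℂ)) :=
    (tendsto_ofReal_sq_mul_nhdsGT_one hγ0).frequently (Eventually.frequently
      (eventually_of_mem self_mem_nhdsWithin fun c (hc : 1 < c) =>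
        besselIntegral_sq_mul ν γ (zero_lt_one.trans hc) hγ))
  exact hlhs.eqOn_of_preconnected_of_frequently_eq hrhs (convex_halfSpace_re_gt 0).isPreconnected
    hγ hray hβ
end
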